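/- The composite of two weak equivalences (between objects of 𝒞) is a weak equivalence. -/

import Mathlib

open CategoryTheory CategoryTheory.Limits

universe v u

variable {𝒜 : Type u} [Category.{v} 𝒜] [Abelian 𝒜]

/-- `(f, g)` forms a short exact sequence `0 ⟶ X ⟶ Y ⟶ Z ⟶ 0` in the ambient
abelian category `𝒜`. -/
def IsShortExactSeq {X Y Z : 𝒜} (f : X ⟶ Y) (g : Y ⟶ Z) : Prop :=
  ∃ w : f ≫ g = 0, (ShortComplex.mk f g w).ShortExact

/-- A class of objects is closed under isomorphisms. -/
def IsoClosed (P : 𝒜 → Prop) : Prop := ∀ ⦃X Y : 𝒜⦄, (X ≅ Y) → P X → P Y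

/-- `Ext¹(X, Y) = 0` relative to the exact subcategory determined by `E`:
every short exact sequence `0 ⟶ Y ⟶ M ⟶ X ⟶ 0` in `E` splits. -/
def Ext1IsZero (E : 𝒜 → Prop) (X Y : 𝒜) : Prop :=
  ∀ ⦃M : 𝒜⦄ (f : Y ⟶ M) (g : M ⟶ X), E M → IsShortExactSeq f g →
    ∃ r : M ⟶ Y, f ≫ r = 𝟙 Y

/-- `(C, I)` is a cotorsion pair in the exact subcategory of `𝒜` determined by
the class of objects `E`: the two classes are each other's orthogonal
complement with respect to `Ext¹`. -/
structure IsCotorsionPair (E C I : 𝒜 → Prop) : Prop where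
  right_eq : ∀ Y, I Y ↔ (E Y ∧ ∀ ⦃X⦄, C X → Ext1IsZero E X Y)
  left_eq : ∀ X, C X ↔ (E X ∧ ∀ ⦃Y⦄, I Y → Ext1IsZero E X Y)

/-- The cotorsion pair `(C, I)` in `E` is complete: every object of `E` admits
both kinds of approximation sequences. -/
def IsCompleteCP (E C I : 𝒜 → Prop) : Prop :=
  (∀ A, E A → ∃ (Y P : 𝒜) (f : A ⟶ Y) (g : Y ⟶ P),
      I Y ∧ C P ∧ IsShortExactSeq f g) ∧
  (∀ A, E A → ∃ (Y P : 𝒜) (f : Y ⟶ P) (g : P ⟶ A),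
      I Y ∧ C P ∧ IsShortExactSeq f g)

/-- The cotorsion pair is hereditary: `C` is closed under kernels of
admissible epimorphisms in `E`. -/
def IsHereditaryCP (E C : 𝒜 → Prop) : Prop :=
  ∀ ⦃X Y Z : 𝒜⦄ (f : X ⟶ Y) (g : Y ⟶ Z),
    IsShortExactSeq f g → E X → C Y → C Z → C X

/-- A cofibration: an admissible monomorphism between objects of `C` whose
cokernel lies in `C`. -/
def IsCofib (C : 𝒜 → Prop) {X Y : 𝒜} (f : X ⟶ Y) : Prop :=
  C X ∧ C Y ∧ ∃ (W : 𝒜) (g : Y ⟶ W), C W ∧ IsShortExactSeq f g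

/-- An acyclic fibration: an admissible epimorphism in `E` whose kernel lies
in `I`. -/
def IsAcyclicFib (E I : 𝒜 → Prop) {Y Z : 𝒜} (g : Y ⟶ Z) : Prop :=
  E Y ∧ E Z ∧ ∃ (K : 𝒜) (k : K ⟶ Y), I K ∧ IsShortExactSeq k g

/-- An acyclic cofibration: an admissible monomorphism between objects of `C`
whose cokernel lies in `C ∩ Z`. -/
def IsAcyclicCofib (C Zc : 𝒜 → Prop) {X Y : 𝒜} (f : X ⟶ Y) : Prop :=
  C X ∧ C Y ∧ ∃ (W : 𝒜) (g : Y ⟶ W), C W ∧ Zc W ∧ IsShortExactSeq f g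

/-- A weak equivalence: a morphism between objects of `C` that factors as an
acyclic cofibration followed by an acyclic fibration. -/
def IsWeakEquiv (E C I Zc : 𝒜 → Prop) {X Y : 𝒜} (f : X ⟶ Y) : Prop :=
  C X ∧ C Y ∧ ∃ (M : 𝒜) (i : X ⟶ M) (p : M ⟶ Y),
    IsAcyclicCofib C Zc i ∧ IsAcyclicFib E I p ∧ i ≫ p = f

/-- The standing setup: a complete hereditary cotorsion pair `(Cc, Ip)` in the
exact subcategory of `𝒜` determined by the isomorphism-closed,
extension-closed class `E`, together with an isomorphism-closed class
`Zc ⊆ E` with `Ip ⊆ Zc`, such that `Zc ∩ Cc` is closed under extensions and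
under cokernels of admissible monomorphisms in `Cc`. -/
structure CotorsionSetup (E Cc Ip Zc : 𝒜 → Prop) : Prop where
  isoE : IsoClosed E
  isoC : IsoClosed Cc
  isoI : IsoClosed Ip
  isoZ : IsoClosed Zc
  extClosedE : ∀ ⦃X Y Z : 𝒜⦄ (f : X ⟶ Y) (g : Y ⟶ Z),
    IsShortExactSeq f g → E X → E Z → E Y
  cp : IsCotorsionPair E Cc Ip
  complete : IsCompleteCP E Cc Ip
  hereditary : IsHereditaryCP E Cc
  zSubE : ∀ ⦃X⦄, Zc X → E X
  iSubZ : ∀ ⦃X⦄, Ip X → Zc X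
  zcExtClosed : ∀ ⦃X Y Z : 𝒜⦄ (f : X ⟶ Y) (g : Y ⟶ Z), IsShortExactSeq f g →
    Cc X → Cc Y → Cc Z → Zc X → Zc Z → Zc Y
  zcCokerClosed : ∀ ⦃X Y Z : 𝒜⦄ (f : X ⟶ Y) (g : Y ⟶ Z), IsShortExactSeq f g →
    Cc X → Cc Y → Cc Z → Zc X → Zc Y → Zc Z

/-!
The heart of the argument is an interchange: an acyclic fibration `p : M ⟶ Y` followed by an
acyclic cofibration `i : Y ⟶ N` (cokernel `W`) is also an acyclic cofibration followed by an
acyclic fibration. Take a special `Cc`-precover `0 → I → Q → N → 0`. The pullback `Y'` of `Q`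
along `i` is the kernel of `Q ↠ W`, so it lies in `Cc` by heredity; as `Ext¹(Y', ker p) = 0`,
the map `Y' ⟶ Y` lifts through `p`, and pushing `Y' ↪ Q` out along the lift gives
`M ↪ P ↠ N` with cokernel `W` and kernel `ker p`.

Writing `f ≫ g` as `i₁ ≫ (p₁ ≫ i₂) ≫ p₂` and interchanging the middle, it remains to compose
acyclic cofibrations and acyclic fibrations: the cokernel (kernel) of a composite is an
extension of the cokernels (kernels), and `Cc`, `Cc ∩ Zc` and `Ip` are closed under extensions.
-/

open Category

section ShortExactSequences

attribute [local instance] Abelian.Pseudoelement.objectToSort Abelian.Pseudoelement.homToFun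

open Abelian Abelian.Pseudoelement

namespace IsShortExactSeq

variable {X Y Z : 𝒜} {f : X ⟶ Y} {g : Y ⟶ Z}

lemma w (h : IsShortExactSeq f g) : f ≫ g = 0 := h.1

lemma mono (h : IsShortExactSeq f g) : Mono f := h.2.mono_f

lemma epi (h : IsShortExactSeq f g) : Epi g := h.2.epi_g

lemma exists_lift (h : IsShortExactSeq f g) {T : 𝒜} (a : T ⟶ Y) (ha : a ≫ g = 0) :
    ∃ b : T ⟶ X, b ≫ f = a :=
  have := h.mono
  ⟨_, h.2.exact.lift_f a ha⟩

lemma exists_desc (h : IsShortExactSeq f g) {T : 𝒜} (a : Y ⟶ T) (ha : f ≫ a = 0) :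
    ∃ b : Z ⟶ T, g ≫ b = a :=
  have := h.epi
  ⟨_, h.2.exact.g_desc a ha⟩

lemma pseudo_exact (h : IsShortExactSeq f g) (y : Y) (hy : g y = 0) : ∃ x : X, f x = y :=
  pseudo_exact_of_exact h.2.exact y hy

lemma exists_section_of_retraction (h : IsShortExactSeq f g) {r : Y ⟶ X}
    (hr : f ≫ r = 𝟙 X) : ∃ s : Z ⟶ Y, s ≫ g = 𝟙 Z :=
  ⟨_, (ShortComplex.Splitting.ofExactOfRetraction _ h.2.exact r hr h.epi).s_g⟩

lemma exists_retraction_of_section (h : IsShortExactSeq f g) {s : Z ⟶ Y}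
    (hs : s ≫ g = 𝟙 Z) : ∃ r : Y ⟶ X, f ≫ r = 𝟙 X :=
  ⟨_, (ShortComplex.Splitting.ofExactOfSection _ h.2.exact s hs h.mono).f_r⟩

lemma of_isLimit (w : f ≫ g = 0) [Mono f] [Epi g] (hf : IsLimit (KernelFork.ofι f w)) :
    IsShortExactSeq f g :=
  ⟨w, .mk' (ShortComplex.exact_of_f_is_kernel _ hf) ‹Mono f› ‹Epi g›⟩

lemma of_isColimit (w : f ≫ g = 0) [Mono f] [Epi g] (hg : IsColimit (CokernelCofork.ofπ g w)) :
    IsShortExactSeq f g :=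
  ⟨w, .mk' (ShortComplex.exact_of_g_is_cokernel _ hg) ‹Mono f› ‹Epi g›⟩

lemma of_pseudo_exact (w : f ≫ g = 0) [Mono f] [Epi g]
    (hex : ∀ y : Y, g y = 0 → ∃ x : X, f x = y) : IsShortExactSeq f g :=
  ⟨w, .mk' (exact_of_pseudo_exact _ hex) ‹Mono f› ‹Epi g›⟩

lemma pullback_snd {K M B : 𝒜} {k : K ⟶ M} {p : M ⟶ B} (h : IsShortExactSeq k p)
    {T : 𝒜} (t : T ⟶ B) : ∃ k' : K ⟶ pullback p t, IsShortExactSeq k' (pullback.snd p t) := by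
  have := h.mono
  have := h.epi
  have w : k ≫ p = 0 ≫ t := by rw [h.w, zero_comp]
  have hk : pullback.lift k 0 w ≫ pullback.fst p t = k := pullback.lift_fst _ _ _
  have := mono_of_mono_fac hk
  refine ⟨_, .of_isLimit (pullback.lift_snd k 0 w) (KernelFork.IsLimit.ofι' _ _ fun a ha => ?_)⟩
  have hap : (a ≫ pullback.fst p t) ≫ p = 0 := by
    rw [assoc, pullback.condition, reassoc_of% ha, zero_comp]
  exact ⟨h.2.exact.lift _ hap, pullback.hom_ext (by rw [assoc, hk, h.2.exact.lift_f])
    (by rw [assoc, pullback.lift_snd, comp_zero, ha])⟩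

lemma pushout_inr {B M X' : 𝒜} {u : B ⟶ M} {v : M ⟶ X'} (h : IsShortExactSeq u v)
    {T : 𝒜} (t : B ⟶ T) :
    ∃ d : pushout u t ⟶ X', pushout.inl u t ≫ d = v ∧ IsShortExactSeq (pushout.inr u t) d := by
  have := h.mono
  have := h.epi
  have w : u ≫ v = t ≫ 0 := by rw [h.w, comp_zero]
  have hd : pushout.inl u t ≫ pushout.desc v 0 w = v := pushout.inl_desc _ _ _
  have := epi_of_epi_fac hd
  refine ⟨_, hd, .of_isColimit (pushout.inr_desc _ _ _)
    (CokernelCofork.IsColimit.ofπ' _ _ fun e he => ?_)⟩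
  have hue : u ≫ pushout.inl u t ≫ e = 0 := by rw [pushout.condition_assoc, he, comp_zero]
  exact ⟨h.2.exact.desc _ hue, pushout.hom_ext (by rw [pushout.inl_desc_assoc, h.2.exact.g_desc])
    (by rw [pushout.inr_desc_assoc, zero_comp, he])⟩

lemma pullback_fst {Y N W : 𝒜} {i : Y ⟶ N} {c : N ⟶ W} (h : IsShortExactSeq i c)
    {Q : 𝒜} (π : Q ⟶ N) [Epi π] : IsShortExactSeq (pullback.fst π i) (π ≫ c) := by
  have := h.mono
  have := h.epi
  refine .of_isLimit (by rw [pullback.condition_assoc, h.w, comp_zero])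
    (KernelFork.IsLimit.ofι' _ _ fun a ha => ?_)
  have hac : (a ≫ π) ≫ c = 0 := by rw [assoc, ha]
  exact ⟨pullback.lift a (h.2.exact.lift _ hac) (h.2.exact.lift_f _ _).symm,
    pullback.lift_fst _ _ _⟩

lemma comp_of_comm_sq {K M Y P N W : 𝒜} {k : K ⟶ M} {p : M ⟶ Y} {j : M ⟶ P} {d : P ⟶ W}
    {i : Y ⟶ N} {c : N ⟶ W} {q : P ⟶ N} (h₁ : IsShortExactSeq k p) (h₂ : IsShortExactSeq j d)
    (h₃ : IsShortExactSeq i c) (hjq : j ≫ q = p ≫ i) (hqc : q ≫ c = d) :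
    IsShortExactSeq (k ≫ j) q := by
  have := h₁.mono
  have := h₂.mono
  have := h₃.mono
  have := h₁.epi
  have := h₂.epi
  have : Epi q := Preadditive.epi_of_cancel_zero _ fun e he => by
    have hie : i ≫ e = 0 := by rw [← cancel_epi p, ← reassoc_of% hjq, he, comp_zero, comp_zero]
    obtain ⟨b, rfl⟩ := h₃.exists_desc e hie
    rw [zero_of_epi_comp (g := b) d (by rw [← hqc, assoc, he]), comp_zero]
  refine .of_isLimit (by rw [assoc, hjq, reassoc_of% h₁.w, zero_comp])
    (KernelFork.IsLimit.ofι' _ _ fun a ha => ?_)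
  have had : a ≫ d = 0 := by rw [← hqc, reassoc_of% ha, zero_comp]
  have hap : h₂.2.exact.lift a had ≫ p = 0 := by
    rw [← cancel_mono i, assoc, ← hjq, h₂.2.exact.lift_f_assoc, ha, zero_comp]
  exact ⟨h₁.2.exact.lift _ hap, by rw [← assoc, h₁.2.exact.lift_f, h₂.2.exact.lift_f]⟩

end IsShortExactSeq

lemma isShortExactSeq_kernel_ι {Y Z : 𝒜} (g : Y ⟶ Z) [Epi g] :
    IsShortExactSeq (kernel.ι g) g :=
  .of_isLimit (kernel.condition g) (kernelIsKernel g)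

lemma isShortExactSeq_cokernel_π {X Y : 𝒜} (f : X ⟶ Y) [Mono f] :
    IsShortExactSeq f (cokernel.π f) :=
  .of_isColimit (cokernel.condition f) (cokernelIsCokernel f)

lemma exists_isShortExactSeq_cokernel_comp {X Y N W₁ W₂ : 𝒜} {m₁ : X ⟶ Y} {e₁ : Y ⟶ W₁}
    {m₂ : Y ⟶ N} {e₂ : N ⟶ W₂} (h₁ : IsShortExactSeq m₁ e₁) (h₂ : IsShortExactSeq m₂ e₂) :
    ∃ (w : W₁ ⟶ cokernel (m₁ ≫ m₂)) (r : cokernel (m₁ ≫ m₂) ⟶ W₂), IsShortExactSeq w r := by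
  have := h₁.mono
  have := h₁.epi
  have := h₂.mono
  have := h₂.epi
  obtain ⟨w, hw⟩ := h₁.exists_desc (m₂ ≫ cokernel.π _) (by rw [← assoc, cokernel.condition])
  have hr : cokernel.π (m₁ ≫ m₂) ≫ cokernel.desc _ e₂ (by rw [assoc, h₂.w, comp_zero]) = e₂ :=
    cokernel.π_desc _ _ _
  have := epi_of_epi_fac hr
  have : Mono w := mono_of_zero_of_map_zero _ fun x hx => by
    obtain ⟨y, rfl⟩ := pseudo_surjective_of_epi e₁ x
    obtain ⟨z, hz⟩ := (isShortExactSeq_cokernel_π (m₁ ≫ m₂)).pseudo_exact (m₂ y)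
      (by rw [← Pseudoelement.comp_apply, ← hw, Pseudoelement.comp_apply, hx])
    have hzy : m₁ z = y := pseudo_injective_of_mono m₂ (by rwa [← Pseudoelement.comp_apply])
    rw [← hzy, ← Pseudoelement.comp_apply, h₁.w, Pseudoelement.zero_apply]
  refine ⟨w, _, .of_pseudo_exact (by rw [← cancel_epi e₁, reassoc_of% hw, hr, h₂.w, comp_zero])
    fun x hx => ?_⟩
  obtain ⟨n, rfl⟩ := pseudo_surjective_of_epi (cokernel.π (m₁ ≫ m₂)) x
  obtain ⟨y, rfl⟩ := h₂.pseudo_exact n (by rwa [← hr, Pseudoelement.comp_apply])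
  exact ⟨e₁ y, by rw [← Pseudoelement.comp_apply, hw, Pseudoelement.comp_apply]⟩

lemma exists_isShortExactSeq_kernel_comp {A P N B Z : 𝒜} {a : A ⟶ P} {q : P ⟶ N}
    {b : B ⟶ N} {g : N ⟶ Z} (h₁ : IsShortExactSeq a q) (h₂ : IsShortExactSeq b g) :
    ∃ (k : A ⟶ kernel (q ≫ g)) (β : kernel (q ≫ g) ⟶ B), IsShortExactSeq k β := by
  have := h₁.mono
  have := h₁.epi
  have := h₂.mono
  have := h₂.epi
  have hk : kernel.lift (q ≫ g) a (by rw [reassoc_of% h₁.w, zero_comp]) ≫ kernel.ι _ = a :=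
    kernel.lift_ι _ _ _
  have := mono_of_mono_fac hk
  obtain ⟨β, hβ⟩ := h₂.exists_lift (kernel.ι (q ≫ g) ≫ q) (by rw [assoc, kernel.condition])
  have : Epi β := epi_of_pseudo_surjective _ fun x => by
    obtain ⟨y, hy⟩ := pseudo_surjective_of_epi q (b x)
    obtain ⟨z, rfl⟩ := (isShortExactSeq_kernel_ι (q ≫ g)).pseudo_exact y
      (by rw [Pseudoelement.comp_apply, hy, ← Pseudoelement.comp_apply, h₂.w,
        Pseudoelement.zero_apply])
    exact ⟨z, pseudo_injective_of_mono b (by rw [← Pseudoelement.comp_apply, hβ,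
      Pseudoelement.comp_apply, hy])⟩
  refine ⟨_, β, .of_pseudo_exact
    (zero_of_comp_mono b (by rw [assoc, hβ, reassoc_of% hk, h₁.w])) fun z hz => ?_⟩
  obtain ⟨w, hw⟩ := h₁.pseudo_exact (kernel.ι (q ≫ g) z)
    (by rw [← Pseudoelement.comp_apply, ← hβ, Pseudoelement.comp_apply, hz,
      Pseudoelement.apply_zero])
  exact ⟨w, pseudo_injective_of_mono (kernel.ι _) (by rw [← Pseudoelement.comp_apply, hk, hw])⟩

lemma exists_isShortExactSeq_comp_cokernel_π {A B C Y M : 𝒜} {a : A ⟶ B} {c : B ⟶ C}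
    {f : Y ⟶ M} {g : M ⟶ B} (hac : IsShortExactSeq a c) (hfg : IsShortExactSeq f g)
    {s : A ⟶ M} (hs : s ≫ g = a) :
    ∃ r : cokernel s ⟶ C, IsShortExactSeq (f ≫ cokernel.π s) r := by
  have := hac.mono
  have := hac.epi
  have := hfg.mono
  have := hfg.epi
  have := mono_of_mono_fac hs
  have hs' := isShortExactSeq_cokernel_π s
  have hr : cokernel.π s ≫ cokernel.desc s (g ≫ c) (by rw [reassoc_of% hs, hac.w]) = g ≫ c :=
    cokernel.π_desc _ _ _
  have := epi_of_epi_fac hr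
  have : Mono (f ≫ cokernel.π s) := mono_of_zero_of_map_zero _ fun y hy => by
    obtain ⟨x, hx⟩ := hs'.pseudo_exact (f y) (by rwa [← Pseudoelement.comp_apply])
    have hx0 : x = 0 := zero_of_map_zero a (pseudo_injective_of_mono a) x (by
      rw [← hs, Pseudoelement.comp_apply, hx, ← Pseudoelement.comp_apply, hfg.w,
        Pseudoelement.zero_apply])
    exact zero_of_map_zero f (pseudo_injective_of_mono f) y (by
      rw [← hx, hx0, Pseudoelement.apply_zero])
  refine ⟨_, .of_pseudo_exact (by rw [assoc, hr, reassoc_of% hfg.w, zero_comp]) fun x hx => ?_⟩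
  obtain ⟨m, rfl⟩ := pseudo_surjective_of_epi (cokernel.π s) x
  obtain ⟨α, hα⟩ := hac.pseudo_exact (g m) (by
    rwa [← Pseudoelement.comp_apply, ← hr, Pseudoelement.comp_apply])
  -- `z` plays the role of the difference `m - s α`
  obtain ⟨z, hz, hzπ⟩ := sub_of_eq_image g m (s α) (by rw [← Pseudoelement.comp_apply, hs, hα])
  obtain ⟨y, rfl⟩ := hfg.pseudo_exact z hz
  exact ⟨y, by rw [Pseudoelement.comp_apply, hzπ _ _ (by rw [← Pseudoelement.comp_apply,
    cokernel.condition, Pseudoelement.zero_apply])]⟩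

lemma exists_isShortExactSeq_kernel_ι_comp {A B C M X : 𝒜} {f : A ⟶ B} {g : B ⟶ C}
    {u : B ⟶ M} {v : M ⟶ X} (hfg : IsShortExactSeq f g) (huv : IsShortExactSeq u v)
    {φ : M ⟶ C} (hφ : u ≫ φ = g) :
    ∃ k : A ⟶ kernel φ, IsShortExactSeq k (kernel.ι φ ≫ v) := by
  have := hfg.mono
  have := hfg.epi
  have := huv.mono
  have := huv.epi
  have := epi_of_epi_fac hφ
  have hk : kernel.lift φ (f ≫ u) (by rw [assoc, hφ, hfg.w]) ≫ kernel.ι φ = f ≫ u :=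
    kernel.lift_ι _ _ _
  have := mono_of_mono_fac hk
  have : Epi (kernel.ι φ ≫ v) := epi_of_pseudo_surjective _ fun x => by
    obtain ⟨y, rfl⟩ := pseudo_surjective_of_epi v x
    obtain ⟨b, hb⟩ := pseudo_surjective_of_epi g (φ y)
    -- `z` plays the role of the difference `y - u b`
    obtain ⟨z, hz, hzv⟩ := sub_of_eq_image φ y (u b) (by rw [← Pseudoelement.comp_apply, hφ, hb])
    obtain ⟨w, rfl⟩ := (isShortExactSeq_kernel_ι φ).pseudo_exact z hz
    exact ⟨w, by rw [Pseudoelement.comp_apply, hzv _ _ (by rw [← Pseudoelement.comp_apply,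
      huv.w, Pseudoelement.zero_apply])]⟩
  refine ⟨_, .of_pseudo_exact (by rw [reassoc_of% hk, huv.w, comp_zero]) fun z hz => ?_⟩
  obtain ⟨b, hb⟩ := huv.pseudo_exact (kernel.ι φ z) (by rwa [← Pseudoelement.comp_apply])
  obtain ⟨α, rfl⟩ := hfg.pseudo_exact b (by rw [← hφ, Pseudoelement.comp_apply, hb,
    ← Pseudoelement.comp_apply, kernel.condition, Pseudoelement.zero_apply])
  exact ⟨α, pseudo_injective_of_mono (kernel.ι φ) (by
    rw [← Pseudoelement.comp_apply, hk, Pseudoelement.comp_apply, hb])⟩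

end ShortExactSequences

def ExtensionClosed (P : 𝒜 → Prop) : Prop :=
  ∀ ⦃X Y Z : 𝒜⦄ (f : X ⟶ Y) (g : Y ⟶ Z), IsShortExactSeq f g → P X → P Z → P Y

section Ext1

variable {E : 𝒜 → Prop}

lemma Ext1IsZero.exists_lift (hE : ExtensionClosed E) {T K M B : 𝒜} (h0 : Ext1IsZero E T K)
    (hT : E T) (hK : E K) {k : K ⟶ M} {p : M ⟶ B} (h : IsShortExactSeq k p) (t : T ⟶ B) :
    ∃ s : T ⟶ M, s ≫ p = t := by
  obtain ⟨k', hk'⟩ := h.pullback_snd t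
  obtain ⟨r, hr⟩ := h0 k' (pullback.snd p t) (hE _ _ hk' hK hT) hk'
  obtain ⟨σ, hσ⟩ := hk'.exists_section_of_retraction hr
  exact ⟨σ ≫ pullback.fst p t, by rw [assoc, pullback.condition, reassoc_of% hσ]⟩

lemma Ext1IsZero.exists_extension (hE : ExtensionClosed E) {B M X I : 𝒜} (h0 : Ext1IsZero E X I)
    (hX : E X) (hI : E I) {u : B ⟶ M} {v : M ⟶ X} (h : IsShortExactSeq u v) (t : B ⟶ I) :
    ∃ φ : M ⟶ I, u ≫ φ = t := by
  obtain ⟨d, -, hd⟩ := h.pushout_inr t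
  obtain ⟨r, hr⟩ := h0 (pushout.inr u t) d (hE _ _ hd hI hX) hd
  exact ⟨pushout.inl u t ≫ r, by rw [pushout.condition_assoc, hr, comp_id]⟩

lemma ext1IsZero_of_isShortExactSeq_left (hE : ExtensionClosed E) {A B C Y : 𝒜}
    {f : A ⟶ B} {g : B ⟶ C} (h : IsShortExactSeq f g) (hA : Ext1IsZero E A Y)
    (hC : Ext1IsZero E C Y) (hEA : E A) (hEC : E C) (hEY : E Y) : Ext1IsZero E B Y := by
  intro M u v _ huv
  obtain ⟨s, hs⟩ := hA.exists_lift hE hEA hEY huv f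
  obtain ⟨r, hr⟩ := exists_isShortExactSeq_comp_cokernel_π h huv hs
  obtain ⟨ρ, hρ⟩ := hC _ r (hE _ _ hr hEY hEC) hr
  exact ⟨cokernel.π s ≫ ρ, by rw [← assoc, hρ]⟩

lemma ext1IsZero_of_isShortExactSeq_right (hE : ExtensionClosed E) {X A B C : 𝒜}
    {f : A ⟶ B} {g : B ⟶ C} (h : IsShortExactSeq f g) (hA : Ext1IsZero E X A)
    (hC : Ext1IsZero E X C) (hEX : E X) (hEA : E A) (hEC : E C) : Ext1IsZero E X B := by
  intro M u v _ huv
  obtain ⟨φ, hφ⟩ := hC.exists_extension hE hEX hEC huv g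
  obtain ⟨k, hk⟩ := exists_isShortExactSeq_kernel_ι_comp h huv hφ
  obtain ⟨ρ, hρ⟩ := hA k _ (hE _ _ hk hEA hEX) hk
  obtain ⟨σ, hσ⟩ := hk.exists_section_of_retraction hρ
  exact huv.exists_retraction_of_section (s := σ ≫ kernel.ι φ) (by rw [assoc, hσ])

end Ext1

namespace CotorsionSetup

variable {E Cc Ip Zc : 𝒜 → Prop}

lemma E_of_Cc (S : CotorsionSetup E Cc Ip Zc) {A : 𝒜} (h : Cc A) : E A :=
  ((S.cp.left_eq A).1 h).1

lemma E_of_Ip (S : CotorsionSetup E Cc Ip Zc) {A : 𝒜} (h : Ip A) : E A :=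
  ((S.cp.right_eq A).1 h).1

lemma ext1IsZero (S : CotorsionSetup E Cc Ip Zc) {A B : 𝒜} (hA : Cc A) (hB : Ip B) :
    Ext1IsZero E A B :=
  ((S.cp.left_eq A).1 hA).2 hB

lemma extensionClosed_Cc (S : CotorsionSetup E Cc Ip Zc) : ExtensionClosed Cc :=
  fun _ B _ f g h hA hC => (S.cp.left_eq B).2
    ⟨S.extClosedE f g h (S.E_of_Cc hA) (S.E_of_Cc hC), fun _ hY =>
      ext1IsZero_of_isShortExactSeq_left S.extClosedE h (S.ext1IsZero hA hY) (S.ext1IsZero hC hY)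
        (S.E_of_Cc hA) (S.E_of_Cc hC) (S.E_of_Ip hY)⟩

lemma extensionClosed_Ip (S : CotorsionSetup E Cc Ip Zc) : ExtensionClosed Ip :=
  fun _ B _ f g h hA hC => (S.cp.right_eq B).2
    ⟨S.extClosedE f g h (S.E_of_Ip hA) (S.E_of_Ip hC), fun _ hX =>
      ext1IsZero_of_isShortExactSeq_right S.extClosedE h (S.ext1IsZero hX hA) (S.ext1IsZero hX hC)
        (S.E_of_Cc hX) (S.E_of_Ip hA) (S.E_of_Ip hC)⟩

lemma isAcyclicCofib_comp (S : CotorsionSetup E Cc Ip Zc) {X Y Z : 𝒜} {f : X ⟶ Y} {g : Y ⟶ Z}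
    (hf : IsAcyclicCofib Cc Zc f) (hg : IsAcyclicCofib Cc Zc g) :
    IsAcyclicCofib Cc Zc (f ≫ g) := by
  obtain ⟨hX, -, W₁, _, hW₁, hZW₁, h₁⟩ := hf
  obtain ⟨-, hZ, W₂, _, hW₂, hZW₂, h₂⟩ := hg
  obtain ⟨_, _, hwr⟩ := exists_isShortExactSeq_cokernel_comp h₁ h₂
  have := h₁.mono
  have := h₂.mono
  have hW := S.extensionClosed_Cc _ _ hwr hW₁ hW₂
  exact ⟨hX, hZ, _, _, hW, S.zcExtClosed _ _ hwr hW₁ hW hW₂ hZW₁ hZW₂,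
    isShortExactSeq_cokernel_π (f ≫ g)⟩

lemma isAcyclicFib_comp (S : CotorsionSetup E Cc Ip Zc) {X Y Z : 𝒜} {f : X ⟶ Y} {g : Y ⟶ Z}
    (hf : IsAcyclicFib E Ip f) (hg : IsAcyclicFib E Ip g) : IsAcyclicFib E Ip (f ≫ g) := by
  obtain ⟨hX, -, K₁, _, hK₁, h₁⟩ := hf
  obtain ⟨-, hZ, K₂, _, hK₂, h₂⟩ := hg
  obtain ⟨_, _, hkβ⟩ := exists_isShortExactSeq_kernel_comp h₁ h₂
  have := h₁.epi
  have := h₂.epi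
  exact ⟨hX, hZ, _, _, S.extensionClosed_Ip _ _ hkβ hK₁ hK₂, isShortExactSeq_kernel_ι (f ≫ g)⟩

lemma exists_acyclicCofib_comp_acyclicFib_eq
    (S : CotorsionSetup E Cc Ip Zc) {M Y N : 𝒜} {p : M ⟶ Y} {i : Y ⟶ N}
    (hp : IsAcyclicFib E Ip p) (hi : IsAcyclicCofib Cc Zc i) (hM : Cc M) :
    ∃ (P : 𝒜) (j : M ⟶ P) (q : P ⟶ N),
      IsAcyclicCofib Cc Zc j ∧ IsAcyclicFib E Ip q ∧ j ≫ q = p ≫ i := by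
  obtain ⟨-, -, K, k, hK, hkp⟩ := hp
  obtain ⟨hY, hN, W, c, hW, hZW, hic⟩ := hi
  obtain ⟨I, Q, _, π, hI, hQ, hιπ⟩ := S.complete.2 N (S.E_of_Cc hN)
  have := hιπ.epi
  obtain ⟨_, hY'⟩ := hιπ.pullback_snd i
  have hY'Q := hic.pullback_fst π
  have hCY' : Cc (pullback π i) :=
    S.hereditary _ _ hY'Q (S.extClosedE _ _ hY' (S.E_of_Ip hI) (S.E_of_Cc hY)) hQ hW
  obtain ⟨s, hs⟩ := (S.ext1IsZero hCY' hK).exists_lift S.extClosedE (S.E_of_Cc hCY')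
    (S.E_of_Ip hK) hkp (pullback.snd π i)
  obtain ⟨d, hd, hjd⟩ := hY'Q.pushout_inr s
  have hcond : pullback.fst π i ≫ π = s ≫ p ≫ i := by rw [reassoc_of% hs, pullback.condition]
  have hjq : pushout.inr _ _ ≫ pushout.desc π (p ≫ i) hcond = p ≫ i := pushout.inr_desc _ _ _
  have hqc : pushout.desc π (p ≫ i) hcond ≫ c = d := pushout.hom_ext
    (by rw [pushout.inl_desc_assoc, hd]) (by rw [reassoc_of% hjq, hic.w, comp_zero, hjd.w])
  have hP := S.extensionClosed_Cc _ _ hjd hM hW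
  exact ⟨_, _, _, ⟨hM, hP, W, d, hW, hZW, hjd⟩,
    ⟨S.E_of_Cc hP, S.E_of_Cc hN, K, _, hK, hkp.comp_of_comm_sq hjd hic hjq hqc⟩, hjq⟩

end CotorsionSetup

/-- In the standing setup, the composite of two weak
equivalences (between objects of `Cc`) is a weak equivalence. -/
theorem weakEquiv_comp
    (E Cc Ip Zc : 𝒜 → Prop) (S : CotorsionSetup E Cc Ip Zc)
    {X Y Z : 𝒜} (f : X ⟶ Y) (g : Y ⟶ Z)
    (hf : IsWeakEquiv E Cc Ip Zc f) (hg : IsWeakEquiv E Cc Ip Zc g) :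
    IsWeakEquiv E Cc Ip Zc (f ≫ g) := by
  obtain ⟨hX, -, M₁, i₁, p₁, hi₁, hp₁, rfl⟩ := hf
  obtain ⟨-, hZ, M₂, i₂, p₂, hi₂, hp₂, rfl⟩ := hg
  obtain ⟨P, j, q, hj, hq, hjq⟩ := S.exists_acyclicCofib_comp_acyclicFib_eq hp₁ hi₂ hi₁.2.1
  refine ⟨hX, hZ, P, i₁ ≫ j, q ≫ p₂, S.isAcyclicCofib_comp hi₁ hj, S.isAcyclicFib_comp hq hp₂, ?_⟩
  simp only [assoc, reassoc_of% hjq]
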